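/- arXiv:2604.17311 — 4 statements merged into one kernel-verified Lean document; each statement's English description precedes it below -/
import Mathlib

section
/- Let f : ℝ^d → ℝ be convex and differentiable with a minimizer, and let f* be its minimum value. Let X : (0,∞) → ℝ^d be a twice continuously differentiable solution of the flow X''(t) + (r/t)·X'(t) + (1/t^p)·∇f(X(t)) = 0 with X'(0) = 0, where the parameters satisfy r ≥ 1, p ≥ 0 and r + p ≥ 3. Then f(X(t)) − f* = O(1/t^{2−p}), i.e., there exist constants C > 0 and t₀ > 0 such that f(X(t)) − f* ≤ C/t^{2−p} for all t ≥ t₀. -/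
open scoped RealInnerProductSpace
open Real Set

lemma grad_ineq {d : ℕ} (f : EuclideanSpace ℝ (Fin d) → ℝ)
    (hconv : ConvexOn ℝ Set.univ f) (hdiff : Differentiable ℝ f)
    (x y : EuclideanSpace ℝ (Fin d)) :
    f x + ⟪gradient f x, y - x⟫ ≤ f y := by
  set L : ℝ →ᵃ[ℝ] EuclideanSpace ℝ (Fin d) := AffineMap.lineMap x y
  have hφc : ConvexOn ℝ Set.univ (f ∘ L) := by
    have := hconv.comp_affineMap L
    simpa using this
  have hL0 : L 0 = x := AffineMap.lineMap_apply_zero x y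
  have hLd : HasDerivAt L (y - x) 0 := by
    have : HasDerivAt (fun s : ℝ => s • (y - x) + x) ((1:ℝ) • (y - x)) 0 :=
      ((hasDerivAt_id (0:ℝ)).smul_const (y - x)).add_const x
    have hfun : (L : ℝ → EuclideanSpace ℝ (Fin d)) = fun s : ℝ => s • (y - x) + x := by
      funext s; simp [L, AffineMap.lineMap_apply]
    rw [hfun]; simpa only [one_smul] using this
  have hF : HasFDerivAt f (InnerProductSpace.toDual ℝ _ (gradient f x)) x :=
    (hdiff x).hasGradientAt
  have hφd : HasDerivAt (f ∘ L) ⟪gradient f x, y - x⟫ 0 := by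
    have := HasFDerivAt.comp_hasDerivAt 0 (hL0 ▸ hF) hLd
    simpa only [InnerProductSpace.toDual_apply_apply, hL0] using this
  have := hφc.le_slope_of_hasDerivAt (mem_univ (0:ℝ)) (mem_univ (1:ℝ)) one_pos hφd
  have hs : slope (f ∘ L) 0 1 = f y - f x := by
    have h1 : L 1 = y := AffineMap.lineMap_apply_one x y
    simp [slope_def_field, Function.comp, hL0, h1]
  rw [hs] at this
  linarith

/-- For a convex differentiable `f` with a minimizer, any `C²` solution of
`X'' + (r/t) X' + (1/tᵖ) ∇f(X) = 0` with `X'(0) = 0`, `r ≥ 1`, `p ≥ 0` and `r + p ≥ 3`,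
satisfies `f(X(t)) - f* = O(1/t^{2-p})`. -/
theorem stmt_2 {d : ℕ}
    (f : EuclideanSpace ℝ (Fin d) → ℝ)
    (hconv : ConvexOn ℝ Set.univ f) (hdiff : Differentiable ℝ f)
    (xstar : EuclideanSpace ℝ (Fin d)) (hmin : ∀ x, f xstar ≤ f x)
    (r p : ℝ) (hr : 1 ≤ r) (hp : 0 ≤ p) (hrp : 3 ≤ r + p)
    (X : ℝ → EuclideanSpace ℝ (Fin d))
    (hX : ContDiffOn ℝ 2 X (Ici 0)) (hX0 : deriv X 0 = 0)
    (hflow : ∀ t > (0 : ℝ),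
      deriv (deriv X) t + (r / t) • deriv X t + (1 / t ^ p) • gradient f (X t) = 0) :
    ∃ C > (0 : ℝ), ∃ t₀ > (0 : ℝ), ∀ t ≥ t₀, f (X t) - f xstar ≤ C / t ^ (2 - p) := by
  classical
  set V : ℝ → EuclideanSpace ℝ (Fin d) := deriv X with hV
  set g : ℝ → EuclideanSpace ℝ (Fin d) := fun t => gradient f (X t) with hg
  set W : ℝ → EuclideanSpace ℝ (Fin d) := fun t => (r - 1) • (X t - xstar) + t • V t with hW
  set En : ℝ → ℝ := fun t => t ^ (2 - p) * (f (X t) - f xstar) + (1/2) * ⟪W t, W t⟫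
    with hEn
  have hXat : ∀ t : ℝ, 0 < t → ContDiffAt ℝ 2 X t := fun t ht =>
    hX.contDiffAt (Ici_mem_nhds ht)
  have hXd : ∀ t : ℝ, 0 < t → HasDerivAt X (V t) t := fun t ht =>
    ((hXat t ht).differentiableAt (by norm_num)).hasDerivAt
  have hVd : ∀ t : ℝ, 0 < t → HasDerivAt V (deriv V t) t := by
    intro t ht
    have h1 : ContDiffAt ℝ 1 (fderiv ℝ X) t := (hXat t ht).fderiv_right (m := 1) (by norm_num)
    have h2 : ContDiffAt ℝ 1 V t := by
      have hVeq : V = fun s => fderiv ℝ X s 1 := by funext s; rw [hV]; rfl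
      rw [hVeq]
      exact (ContinuousLinearMap.apply ℝ (EuclideanSpace ℝ (Fin d))
        (1:ℝ)).contDiff.contDiffAt.comp t h1
    exact ((h2.differentiableAt (by norm_num))).hasDerivAt
  have key : ∀ t : ℝ, 0 < t →
      HasDerivAt En (t ^ (1 - p) *
        ((2 - p) * (f (X t) - f xstar) - (r - 1) * ⟪g t, X t - xstar⟫)) t := by
    intro t ht
    have htne : t ≠ 0 := ht.ne'
    have hA : deriv V t = -((r/t) • V t) - ((1/t^p) • g t) := by
      have h := hflow t ht
      have h2 : deriv (deriv X) t + (r / t) • deriv X t = -((1 / t ^ p) • gradient f (X t)) :=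
        eq_neg_of_add_eq_zero_left h
      have h3 := eq_sub_of_add_eq h2
      rw [hV, hg, h3]; abel
    have hfX : HasDerivAt (fun s => f (X s)) ⟪g t, V t⟫ t := by
      have hF : HasFDerivAt f (InnerProductSpace.toDual ℝ _ (g t)) (X t) :=
        (hdiff (X t)).hasGradientAt
      have := HasFDerivAt.comp_hasDerivAt t hF (hXd t ht)
      simpa only [InnerProductSpace.toDual_apply_apply, Function.comp_def] using this
    have e1 : t * (r/t) = r := by field_simp
    have e2 : t * (1/t^p) = t ^ (1-p) := by
      rw [rpow_sub ht, rpow_one]; ring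
    have hWval : (r - 1) • V t + (t • deriv V t + (1:ℝ) • V t) = (-(t ^ (1 - p))) • g t := by
      rw [hA, smul_sub, smul_neg, smul_smul, smul_smul, e1, e2, sub_smul, one_smul, neg_smul]
      abel
    have hWd : HasDerivAt W ((-(t ^ (1 - p))) • g t) t := by
      rw [← hWval]
      have h0 := (((hXd t ht).sub_const xstar).const_smul (r-1)).add
        ((hasDerivAt_id t).smul (hVd t ht))
      exact h0
    have hId : HasDerivAt (fun s => ⟪W s, W s⟫)
        (⟪W t, (-(t ^ (1 - p))) • g t⟫ + ⟪(-(t ^ (1 - p))) • g t, W t⟫) t :=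
      HasDerivAt.inner ℝ hWd hWd
    have hrp' : HasDerivAt (fun s : ℝ => s ^ (2 - p)) ((2 - p) * t ^ (2 - p - 1)) t :=
      Real.hasDerivAt_rpow_const (Or.inl htne)
    have hE : HasDerivAt En
        (((2 - p) * t ^ (2 - p - 1)) * (f (X t) - f xstar) + t ^ (2-p) * ⟪g t, V t⟫ +
          ((0:ℝ) * ⟪W t, W t⟫ + (1/2) *
            (⟪W t, (-(t ^ (1 - p))) • g t⟫ + ⟪(-(t ^ (1 - p))) • g t, W t⟫))) t :=
      (hrp'.mul (hfX.sub_const (f xstar))).add ((hasDerivAt_const t ((1:ℝ)/2)).mul hId)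
    convert hE using 1
    have hWin : ⟪W t, g t⟫ = (r-1) * ⟪g t, X t - xstar⟫ + t * ⟪g t, V t⟫ := by
      rw [real_inner_comm]
      simp only [hW, inner_add_right, real_inner_smul_right]
    have h21 : (2 - p - 1 : ℝ) = 1 - p := by ring
    have hsplit : t ^ (2 - p : ℝ) = t ^ (1 - p : ℝ) * t := by
      have h := Real.rpow_add ht (1-p) 1
      rw [Real.rpow_one] at h
      rw [show (2 - p : ℝ) = (1-p) + 1 by ring, h]
    have hWin2 : ⟪g t, W t⟫ = (r-1) * ⟪g t, X t - xstar⟫ + t * ⟪g t, V t⟫ := by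
      rw [real_inner_comm (W t) (g t)]; exact hWin
    rw [h21, real_inner_smul_right, real_inner_smul_left]
    simp only [hWin, hWin2, hsplit]
    ring
  have hanti : AntitoneOn En (Ici 1) := by
    apply antitoneOn_of_deriv_nonpos (convex_Ici 1)
    · intro t htmem
      have ht : (0:ℝ) < t := lt_of_lt_of_le one_pos htmem
      exact (key t ht).continuousAt.continuousWithinAt
    · intro t htmem
      rw [interior_Ici] at htmem
      have ht : (0:ℝ) < t := lt_trans one_pos htmem
      exact (key t ht).differentiableAt.differentiableWithinAt
    · intro t htmem
      rw [interior_Ici] at htmem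
      have ht : (0:ℝ) < t := lt_trans one_pos htmem
      rw [(key t ht).deriv]
      have hA0 : 0 ≤ f (X t) - f xstar := by linarith [hmin (X t)]
      have hB : f (X t) - f xstar ≤ ⟪g t, X t - xstar⟫ := by
        have h := grad_ineq f hconv hdiff (X t) xstar
        have h2 : ⟪gradient f (X t), xstar - X t⟫ = - ⟪g t, X t - xstar⟫ := by
          rw [hg]; rw [← inner_neg_right]; congr 1; abel
        rw [h2] at h
        linarith
      have hpow : (0:ℝ) < t ^ (1 - p) := rpow_pos_of_pos ht _
      have hq1 : (0:ℝ) ≤ (r - 1) * (⟪g t, X t - xstar⟫ - (f (X t) - f xstar)) :=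
        mul_nonneg (by linarith) (by linarith)
      have hq2 : (0:ℝ) ≤ (r + p - 3) * (f (X t) - f xstar) :=
        mul_nonneg (by linarith) hA0
      have : (2 - p) * (f (X t) - f xstar) - (r - 1) * ⟪g t, X t - xstar⟫ ≤ 0 := by
        nlinarith [hq1, hq2]
      exact mul_nonpos_of_nonneg_of_nonpos hpow.le this
  refine ⟨max (En 1) 1, lt_of_lt_of_le one_pos (le_max_right _ _), 1, one_pos, ?_⟩
  intro t ht
  have ht0 : (0:ℝ) < t := lt_of_lt_of_le one_pos ht
  have hEt : En t ≤ En 1 := hanti (mem_Ici.mpr le_rfl) (mem_Ici.mpr ht) ht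
  have hpow : (0:ℝ) < t ^ (2 - p) := rpow_pos_of_pos ht0 _
  have hlow : t ^ (2 - p) * (f (X t) - f xstar) ≤ En t := by
    have hWW : (0:ℝ) ≤ ⟪W t, W t⟫ := real_inner_self_nonneg
    rw [hEn]; dsimp only; linarith
  have h1 : f (X t) - f xstar ≤ max (En 1) 1 / t ^ (2-p) := by
    rw [le_div_iff₀ hpow]
    have := le_max_left (En 1) 1
    nlinarith
  exact h1
end

section
/- Let 𝓛 ∈ ℝ^{N×N} be a symmetric positive semidefinite matrix and let X̃ : (0,∞) → ℝ^N be a twice continuously differentiable solution of the flow X̃''(t) + (r/t)·X̃'(t) + 𝓛 X̃(t) = 0 with X̃'(0) = 0, where r ≥ 2. Then X̃(t)ᵀ 𝓛 X̃(t) = O(1/t²), i.e., there exist constants C > 0 and t₀ > 0 such that X̃(t)ᵀ 𝓛 X̃(t) ≤ C/t² for all t ≥ t₀. -/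
open scoped RealInnerProductSpace
open Real Set

/-- For a symmetric positive semidefinite `𝓛`, any `C²` solution of
`X'' + (r/t) X' + 𝓛 X = 0` with `X'(0) = 0` and `r ≥ 2` satisfies
`X(t)ᵀ 𝓛 X(t) = O(1/t²)`. -/
theorem stmt_3 {N : ℕ}
    (A : Matrix (Fin N) (Fin N) ℝ) (hsymm : A.IsSymm)
    -- the action of `𝓛` on vectors
    (Amul : EuclideanSpace ℝ (Fin N) → EuclideanSpace ℝ (Fin N))
    (hAmul : ∀ v i, Amul v i = ∑ j, A i j * v j)
    (hpsd : ∀ v : EuclideanSpace ℝ (Fin N), 0 ≤ ⟪v, Amul v⟫)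
    (r : ℝ) (hr : 2 ≤ r)
    (X : ℝ → EuclideanSpace ℝ (Fin N))
    (hX : ContDiffOn ℝ 2 X (Ici 0)) (hX0 : deriv X 0 = 0)
    (hflow : ∀ t > (0 : ℝ),
      deriv (deriv X) t + (r / t) • deriv X t + Amul (X t) = 0) :
    ∃ C > (0 : ℝ), ∃ t₀ > (0 : ℝ), ∀ t ≥ t₀, ⟪X t, Amul (X t)⟫ ≤ C / t ^ 2 := by
  classical
  -- package `Amul` as a continuous linear map
  have hadd : ∀ u v : EuclideanSpace ℝ (Fin N), Amul (u + v) = Amul u + Amul v := by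
    intro u v
    ext i
    have : (u + v) = (fun j => u j + v j) := rfl
    simp [hAmul, mul_add, Finset.sum_add_distrib, PiLp.add_apply]
  have hsmul : ∀ (c : ℝ) (u : EuclideanSpace ℝ (Fin N)), Amul (c • u) = c • Amul u := by
    intro c u
    ext i
    simp only [hAmul, PiLp.smul_apply, smul_eq_mul, Finset.mul_sum]
    exact Finset.sum_congr rfl fun j _ => by ring
  set Llin : EuclideanSpace ℝ (Fin N) →ₗ[ℝ] EuclideanSpace ℝ (Fin N) :=
    { toFun := Amul, map_add' := hadd, map_smul' := hsmul } with hLlin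
  set L : EuclideanSpace ℝ (Fin N) →L[ℝ] EuclideanSpace ℝ (Fin N) :=
    LinearMap.toContinuousLinearMap Llin with hLdef
  have hLA : ∀ v, L v = Amul v := fun v => rfl
  -- symmetry of the bilinear form
  have hsym2 : ∀ u v : EuclideanSpace ℝ (Fin N), ⟪u, L v⟫ = ⟪v, L u⟫ := by
    intro u v
    simp only [hLA, PiLp.inner_apply, RCLike.inner_apply, conj_trivial, hAmul,
      Finset.mul_sum, Finset.sum_mul]
    rw [Finset.sum_comm]
    apply Finset.sum_congr rfl
    intro i _
    apply Finset.sum_congr rfl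
    intro j _
    rw [hsymm.apply i j]
    ring
  -- differentiability facts on `Ioi 0`
  have hXo : ContDiffOn ℝ 2 X (Ioi 0) := hX.mono Ioi_subset_Ici_self
  have hV : ∀ t ∈ Ioi (0:ℝ), HasDerivAt X (deriv X t) t := by
    intro t ht
    have : DifferentiableAt ℝ X t := by
      have := (hXo.differentiableOn (by norm_num)).differentiableAt
        (isOpen_Ioi.mem_nhds ht)
      exact this
    exact this.hasDerivAt
  have hDc : ContDiffOn ℝ 1 (deriv X) (Ioi 0) :=
    hXo.deriv_of_isOpen isOpen_Ioi (by norm_num)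
  have hW : ∀ t ∈ Ioi (0:ℝ), HasDerivAt (deriv X) (deriv (deriv X) t) t := by
    intro t ht
    have : DifferentiableAt ℝ (deriv X) t :=
      (hDc.differentiableOn (by norm_num)).differentiableAt (isOpen_Ioi.mem_nhds ht)
    exact this.hasDerivAt
  -- the Lyapunov energy
  set E : ℝ → ℝ := fun t =>
    t ^ 2 * ⟪X t, L (X t)⟫ + ⟪X t + t • deriv X t, X t + t • deriv X t⟫ +
      (r - 2) * ⟪X t, X t⟫ with hEdef
  have hE : ∀ t ∈ Ioi (0:ℝ),
      HasDerivAt E (2 * t * (2 - r) * ⟪deriv X t, deriv X t⟫) t := by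
    intro t ht
    have ht0 : (0:ℝ) < t := ht
    set v := deriv X t with hv
    set w := deriv (deriv X) t with hw
    have hXd : HasDerivAt X v t := hV t ht
    have hVd : HasDerivAt (deriv X) w t := hW t ht
    have hLX : HasDerivAt (fun s => L (X s)) (L v) t :=
      (L.hasFDerivAt).comp_hasDerivAt t hXd
    have hq : HasDerivAt (fun s => ⟪X s, L (X s)⟫) (⟪X t, L v⟫ + ⟪v, L (X t)⟫) t :=
      hXd.inner ℝ hLX
    have hY : HasDerivAt (fun s => X s + s • deriv X s) (v + (t • w + (1:ℝ) • v)) t :=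
      hXd.add ((hasDerivAt_id t).smul hVd)
    have hYq : HasDerivAt (fun s => ⟪X s + s • deriv X s, X s + s • deriv X s⟫)
        (⟪X t + t • v, v + (t • w + (1:ℝ) • v)⟫ + ⟪v + (t • w + (1:ℝ) • v), X t + t • v⟫) t :=
      hY.inner ℝ hY
    have hXX : HasDerivAt (fun s => ⟪X s, X s⟫) (⟪X t, v⟫ + ⟪v, X t⟫) t :=
      hXd.inner ℝ hXd
    have ht2 : HasDerivAt (fun s : ℝ => s ^ 2) (2 * t) t := by
      simpa using (hasDerivAt_pow 2 t)
    have hE' : HasDerivAt E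
        ((2 * t * ⟪X t, L (X t)⟫ + t ^ 2 * (⟪X t, L v⟫ + ⟪v, L (X t)⟫)) +
          (⟪X t + t • v, v + (t • w + (1:ℝ) • v)⟫ + ⟪v + (t • w + (1:ℝ) • v), X t + t • v⟫) +
          (r - 2) * (⟪X t, v⟫ + ⟪v, X t⟫)) t :=
      ((ht2.mul hq).add hYq).add ((hXX.const_mul (r - 2)))
    -- substitute the flow equation
    have hflow'' : t • w = -(r • v) - t • L (X t) := by
      have h := hflow t ht0
      have h2 : t • deriv (deriv X) t + t • ((r / t) • deriv X t) + t • Amul (X t) = 0 := by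
        rw [← smul_add, ← smul_add, h, smul_zero]
      rw [smul_smul] at h2
      have hc : t * (r / t) = r := by field_simp
      rw [hc] at h2
      have h3 : t • deriv (deriv X) t + r • deriv X t = -(t • Amul (X t)) :=
        eq_neg_of_add_eq_zero_left h2
      have h4 : t • deriv (deriv X) t = -(t • Amul (X t)) - r • deriv X t :=
        eq_sub_of_add_eq h3
      rw [hLA, hw, hv, h4]
      abel
    convert hE' using 1
    rw [hflow'']
    have hsym := hsym2 (X t) v
    simp only [inner_add_left, inner_add_right, inner_smul_left, inner_smul_right,
      inner_sub_left, inner_sub_right, inner_neg_left, inner_neg_right,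
      RCLike.conj_to_real, conj_trivial, one_smul]
    rw [show ⟪X t, L (X t)⟫ = ⟪L (X t), X t⟫ from real_inner_comm _ _,
      show ⟪X t, L v⟫ = ⟪L (X t), v⟫ from (hsym2 (X t) v).trans (real_inner_comm _ _)]
    ring
  -- E is antitone on `Ici 1`
  have hanti : AntitoneOn E (Ici (1:ℝ)) := by
    apply antitoneOn_of_deriv_nonpos (convex_Ici 1)
    · intro t ht
      have ht' : t ∈ Ioi (0:ℝ) := mem_Ioi.2 (lt_of_lt_of_le one_pos ht)
      exact (hE t ht').continuousAt.continuousWithinAt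
    · intro t ht
      rw [interior_Ici] at ht
      have ht' : t ∈ Ioi (0:ℝ) := mem_Ioi.2 (lt_trans one_pos ht)
      exact (hE t ht').differentiableAt.differentiableWithinAt
    · intro t ht
      rw [interior_Ici] at ht
      have ht' : (0:ℝ) < t := lt_trans one_pos ht
      rw [(hE t ht').deriv]
      have h1 : (2 - r) ≤ 0 := by linarith
      have h2 : (0:ℝ) ≤ ⟪deriv X t, deriv X t⟫ := real_inner_self_nonneg
      have h3 : 0 ≤ 2 * t := by linarith
      nlinarith [mul_nonneg (mul_nonneg h3 h2) (show (0:ℝ) ≤ r - 2 by linarith)]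
  -- conclude
  refine ⟨E 1 + 1, ?_, 1, one_pos, ?_⟩
  · have h1 : 0 ≤ ⟪X 1, L (X 1)⟫ := by rw [hLA]; exact hpsd (X 1)
    have h2 : 0 ≤ ⟪X 1 + (1:ℝ) • deriv X 1, X 1 + (1:ℝ) • deriv X 1⟫ :=
      real_inner_self_nonneg
    have h3 : 0 ≤ ⟪X 1, X 1⟫ := real_inner_self_nonneg
    have h4 : (0:ℝ) ≤ (r - 2) := by linarith
    have h5 : 0 ≤ E 1 := by
      simp only [hEdef]
      nlinarith
    linarith
  · intro t ht
    have ht0 : (0:ℝ) < t := lt_of_lt_of_le one_pos ht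
    have hEle : E t ≤ E 1 := hanti (mem_Ici.2 le_rfl) (mem_Ici.2 ht) ht
    have hlow : t ^ 2 * ⟪X t, L (X t)⟫ ≤ E t := by
      simp only [hEdef]
      have h2 : 0 ≤ ⟪X t + t • deriv X t, X t + t • deriv X t⟫ := real_inner_self_nonneg
      have h3 : 0 ≤ ⟪X t, X t⟫ := real_inner_self_nonneg
      nlinarith
    rw [le_div_iff₀ (pow_pos ht0 2)]
    calc ⟪X t, Amul (X t)⟫ * t ^ 2 = t ^ 2 * ⟪X t, L (X t)⟫ := by rw [hLA]; ring
      _ ≤ E t := hlow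
      _ ≤ E 1 := hanti self_mem_Ici ht ht
      _ ≤ E 1 + 1 := by linarith
end

section
/- Let X_1,...,X_n : (0,∞) → ℝ^d be twice continuously differentiable trajectories satisfying, for all t > 0 and each agent i, the flow X_i''(t) + (r/t)·X_i'(t) + Σ_{j=1}^n L_{ij} X_j(t) + (1/t^{3−r})·∇f_i(X_i(t)) = 0, where r ∈ [2,3). Fix an optimal point X* ∈ 𝕊 and set X̃(t) = (X_1(t);...;X_n(t)) ∈ ℝ^{nd}, X̃* = 1_n ⊗ X*, 𝓛 = L ⊗ I_d, and f̃(X̃) = Σ_{i=1}^n f_i(X_i). Then the Lyapunov function V(t) := (1/2)·t²·X̃(t)ᵀ𝓛X̃(t) + t^{r−1}·(f̃(X̃(t)) − f*) + (1/2)·‖t·X̃'(t) + (r−1)·(X̃(t) − X̃*)‖² is nonincreasing on (0,∞). -/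
open scoped RealInnerProductSpace
open Real Set


/-- Gradient inequality for a differentiable convex function. -/
lemma grad_ineq_aux {E : Type*} [NormedAddCommGroup E] [InnerProductSpace ℝ E] [CompleteSpace E]
    {f : E → ℝ} (hc : ConvexOn ℝ Set.univ f) (hd : Differentiable ℝ f) (x y : E) :
    f x + ⟪gradient f x, y - x⟫ ≤ f y := by
  set φ : ℝ → ℝ := fun s => f (x + s • (y - x)) with hφdef
  have hline : HasDerivAt (fun s : ℝ => x + s • (y - x)) (y - x) 0 := by
    simpa using ((hasDerivAt_id (0:ℝ)).smul_const (y - x)).const_add x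
  have hF : HasFDerivAt f (InnerProductSpace.toDual ℝ E (gradient f x)) x :=
    hasGradientAt_iff_hasFDerivAt.mp (hd x).hasGradientAt
  have hφ0 : HasDerivAt φ ⟪gradient f x, y - x⟫ 0 := by
    have h := hF.comp_hasDerivAt_of_eq 0 hline (by simp)
    simpa [hφdef, Function.comp_def, InnerProductSpace.toDual_apply_apply] using h
  have hφc : ConvexOn ℝ Set.univ φ := by
    have := hc.comp_affineMap (AffineMap.lineMap x y : ℝ →ᵃ[ℝ] E)
    have he : φ = f ∘ (AffineMap.lineMap x y : ℝ →ᵃ[ℝ] E) := by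
      funext s; simp [hφdef, AffineMap.lineMap_apply, add_comm]
    rw [he]
    simpa using this
  have hs := hφc.le_slope_of_hasDerivAt (mem_univ (0:ℝ)) (mem_univ (1:ℝ)) one_pos hφ0
  have : slope φ 0 1 = f y - f x := by simp [slope, hφdef]
  rw [this] at hs
  linarith

/-- Expansion of the C-term inner product, with abstract atoms. -/
lemma helperC {E : Type*} [NormedAddCommGroup E] [InnerProductSpace ℝ E]
    (v x w L G : E) (t ρ σ : ℝ) :
    ⟪t • v + ρ • (x - w), -(t • L + σ • G)⟫ + ⟪-(t • L + σ • G), t • v + ρ • (x - w)⟫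
      = (-2*(t*t)) * ⟪v, L⟫ + (-2*(ρ*t)) * ⟪x, L⟫ + (2*(ρ*t)) * ⟪w, L⟫
        + (-2*(t*σ)) * ⟪G, v⟫ + (-2*(ρ*σ)) * ⟪G, x - w⟫ := by
  simp only [inner_add_left, inner_add_right, inner_sub_left, inner_sub_right,
    real_inner_smul_left, real_inner_smul_right, inner_neg_left, inner_neg_right]
  simp only [real_inner_comm v L, real_inner_comm x L, real_inner_comm w L,
    real_inner_comm v G, real_inner_comm x G, real_inner_comm w G]
  ring

/-- The Lyapunov function
`V(t) = ½ t² X̃ᵀ𝓛X̃ + t^{r-1} (f̃(X̃) - f*) + ½ ‖t X̃' + (r-1)(X̃ - X̃*)‖²`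
is nonincreasing on `(0, ∞)` along the distributed Nesterov flow with `r ∈ [2,3)`.
Here `X̃ᵀ𝓛X̃ = Σᵢ ⟪Xᵢ, Σⱼ Lᵢⱼ Xⱼ⟫` and the stacked norm squares add up over agents. -/
theorem stmt_10 {n d : ℕ} (hn : 0 < n)
    -- the graph Laplacian
    (Lap : Matrix (Fin n) (Fin n) ℝ) (hsymm : Lap.IsSymm)
    (hpsd : ∀ v : Fin n → ℝ, 0 ≤ ∑ i, v i * ∑ j, Lap i j * v j)
    (hL1 : ∀ i, ∑ j, Lap i j = 0)
    -- the local objective functions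
    (f : Fin n → EuclideanSpace ℝ (Fin d) → ℝ)
    (hconv : ∀ i, ConvexOn ℝ Set.univ (f i))
    (hdiff : ∀ i, Differentiable ℝ (f i))
    (Lf : ℝ) (hLf : 0 < Lf)
    (hlip : ∀ i, LipschitzWith (Real.toNNReal Lf) (gradient (f i)))
    -- an optimal point of the sum objective and the optimal value
    (Xstar : EuclideanSpace ℝ (Fin d))
    (hXstar : ∀ y, (∑ i, f i Xstar) ≤ ∑ i, f i y)
    (fstar : ℝ) (hfstar : fstar = ∑ i, f i Xstar)
    -- the parameter
    (r : ℝ) (hr : 2 ≤ r) (hr' : r < 3)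
    -- the trajectories and the flow
    (X : Fin n → ℝ → EuclideanSpace ℝ (Fin d))
    (hX : ∀ i, ContDiffOn ℝ 2 (X i) (Ioi 0))
    (hflow : ∀ i, ∀ t > (0 : ℝ),
      deriv (deriv (X i)) t + (r / t) • deriv (X i) t
        + (∑ j, Lap i j • X j t) + (1 / t ^ (3 - r)) • gradient (f i) (X i t) = 0) :
    AntitoneOn (fun t : ℝ =>
      (1 / 2) * t ^ 2 * (∑ i, ⟪X i t, ∑ j, Lap i j • X j t⟫)
        + t ^ (r - 1) * ((∑ i, f i (X i t)) - fstar)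
        + (1 / 2) * ∑ i, ‖t • deriv (X i) t + (r - 1) • (X i t - Xstar)‖ ^ 2)
      (Ioi 0) := by
  -- scalar fact
  have ht3r : ∀ t : ℝ, 0 < t → t * (1 / t ^ (3 - r)) = t ^ (r - 2) := by
    intro t ht
    have h := Real.rpow_sub ht 1 (3 - r)
    rw [Real.rpow_one] at h
    rw [mul_one_div, show r - 2 = 1 - (3 - r) by ring, h]
  -- positive semidefiniteness of the Laplacian quadratic form
  have hQ : ∀ s : ℝ, (0:ℝ) ≤ ∑ i, ⟪X i s, ∑ j, Lap i j • X j s⟫ := by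
    intro s
    have h1 : ∑ i, ⟪X i s, ∑ j, Lap i j • X j s⟫
        = ∑ i, ∑ k : Fin d, (X i s k) * ∑ j, Lap i j * (X j s k) := by
      refine Finset.sum_congr rfl fun i _ => ?_
      rw [PiLp.inner_apply]
      refine Finset.sum_congr rfl fun k _ => ?_
      have hap : (∑ x : Fin n, Lap i x • X x s) k = ∑ x : Fin n, Lap i x * X x s k := by
        rw [WithLp.ofLp_sum, Finset.sum_apply]
        exact Finset.sum_congr rfl fun x _ => by rw [PiLp.smul_apply, smul_eq_mul]
      rw [RCLike.inner_apply, hap, conj_trivial, mul_comm]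
    rw [h1, Finset.sum_comm]
    exact Finset.sum_nonneg fun k _ => hpsd fun i => X i s k
  -- derivatives of the trajectories
  have hd1 : ∀ i, ∀ s ∈ Ioi (0:ℝ), HasDerivAt (X i) (deriv (X i) s) s := fun i s hs =>
    (((hX i).differentiableOn (by norm_num)).differentiableAt (isOpen_Ioi.mem_nhds hs)).hasDerivAt
  have hd2 : ∀ i, ∀ s ∈ Ioi (0:ℝ), HasDerivAt (deriv (X i)) (deriv (deriv (X i)) s) s := by
    intro i s hs
    have h := ((hX i).deriv_of_isOpen (m := 1) isOpen_Ioi (by norm_num)).differentiableOn one_ne_zero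
    exact (h.differentiableAt (isOpen_Ioi.mem_nhds hs)).hasDerivAt
  have hsymm' : ∀ i j, Lap j i = Lap i j := fun i j => hsymm.apply i j
  -- the derivative of the Lyapunov function is given by the simplified formula
  have hV : ∀ t ∈ Ioi (0:ℝ), HasDerivAt (fun t : ℝ =>
      (1 / 2) * t ^ 2 * (∑ i, ⟪X i t, ∑ j, Lap i j • X j t⟫)
        + t ^ (r - 1) * ((∑ i, f i (X i t)) - fstar)
        + (1 / 2) * ∑ i, ‖t • deriv (X i) t + (r - 1) • (X i t - Xstar)‖ ^ 2)
      ((2 - r) * t * (∑ i, ⟪X i t, ∑ j, Lap i j • X j t⟫)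
        + (r - 1) * t ^ (r - 2) * ((∑ i, f i (X i t)) - fstar
            - ∑ i, ⟪gradient (f i) (X i t), X i t - Xstar⟫)) t := by
    intro t ht
    have ht' : (0:ℝ) < t := ht
    -- symmetry facts at time t
    have hS2 : ∑ i, ⟪X i t, ∑ j, Lap i j • deriv (X j) t⟫
        = ∑ i, ⟪deriv (X i) t, ∑ j, Lap i j • X j t⟫ := by
      simp only [inner_sum, real_inner_smul_right]
      rw [Finset.sum_comm]
      refine Finset.sum_congr rfl fun i _ => Finset.sum_congr rfl fun j _ => ?_
      rw [hsymm' i j, real_inner_comm]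
    have hstar : ∑ i, ⟪Xstar, ∑ j, Lap i j • X j t⟫ = 0 := by
      simp only [inner_sum, real_inner_smul_right]
      rw [Finset.sum_comm]
      refine Finset.sum_eq_zero fun j _ => ?_
      rw [← Finset.sum_mul]
      have : ∑ i, Lap i j = 0 := by
        rw [← hL1 j]
        exact Finset.sum_congr rfl fun i _ => (hsymm' i j).symm
      rw [this, zero_mul]
    -- derivative pieces
    have hLX : ∀ i, HasDerivAt (fun s => ∑ j, Lap i j • X j s)
        (∑ j, Lap i j • deriv (X j) t) t :=
      fun i => HasDerivAt.fun_sum fun j _ => (hd1 j t ht).const_smul (Lap i j)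
    have hQd : HasDerivAt (fun s => ∑ i, ⟪X i s, ∑ j, Lap i j • X j s⟫)
        (∑ i, (⟪X i t, ∑ j, Lap i j • deriv (X j) t⟫
          + ⟪deriv (X i) t, ∑ j, Lap i j • X j t⟫)) t :=
      HasDerivAt.fun_sum fun i _ => (hd1 i t ht).inner ℝ (hLX i)
    have hA := ((hasDerivAt_pow 2 t).const_mul ((1:ℝ)/2)).mul hQd
    have hfi : ∀ i, HasDerivAt (fun s => f i (X i s))
        ⟪gradient (f i) (X i t), deriv (X i) t⟫ t := by
      intro i
      have hF : HasFDerivAt (f i)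
          (InnerProductSpace.toDual ℝ _ (gradient (f i) (X i t))) (X i t) :=
        hasGradientAt_iff_hasFDerivAt.mp ((hdiff i) (X i t)).hasGradientAt
      have h := hF.comp_hasDerivAt t (hd1 i t ht)
      simpa [Function.comp_def, InnerProductSpace.toDual_apply_apply] using h
    have hB := (Real.hasDerivAt_rpow_const (p := r - 1) (Or.inl (ne_of_gt ht'))).mul
      ((HasDerivAt.fun_sum fun i (_ : i ∈ Finset.univ) => hfi i).sub_const fstar)
    have hg : ∀ i, HasDerivAt (fun s => s • deriv (X i) s + (r-1) • (X i s - Xstar))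
        ((t • deriv (deriv (X i)) t + (1:ℝ) • deriv (X i) t) + (r-1) • deriv (X i) t) t :=
      fun i => ((hasDerivAt_id' t).smul (hd2 i t ht)).add
        (((hd1 i t ht).sub_const Xstar).const_smul (r-1))
    -- flow substitution
    have hgi' : ∀ i, (t • deriv (deriv (X i)) t + (1:ℝ) • deriv (X i) t) + (r-1) • deriv (X i) t
        = -(t • (∑ j, Lap i j • X j t) + t^(r-2) • gradient (f i) (X i t)) := by
      intro i
      have h := hflow i t ht'
      rw [add_assoc, add_assoc] at h
      have ha := eq_neg_of_add_eq_zero_left h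
      rw [ha]
      have e1 : t • ((r/t) • deriv (X i) t) = r • deriv (X i) t := by
        rw [smul_smul]; congr 1; field_simp
      have e2 : t • ((1/t^(3-r)) • gradient (f i) (X i t))
          = t^(r-2) • gradient (f i) (X i t) := by
        rw [smul_smul, ht3r t ht']
      rw [smul_neg, smul_add, smul_add, e1, e2]
      module
    have hN : ∀ i, HasDerivAt
        (fun s => ‖s • deriv (X i) s + (r-1) • (X i s - Xstar)‖^2)
        (⟪t • deriv (X i) t + (r-1) • (X i t - Xstar),
            -(t • (∑ j, Lap i j • X j t) + t^(r-2) • gradient (f i) (X i t))⟫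
          + ⟪-(t • (∑ j, Lap i j • X j t) + t^(r-2) • gradient (f i) (X i t)),
            t • deriv (X i) t + (r-1) • (X i t - Xstar)⟫) t := by
      intro i
      have h := (hg i).inner ℝ (hg i)
      rw [hgi' i] at h
      simp only [real_inner_self_eq_norm_sq] at h
      exact h
    have hC := (HasDerivAt.fun_sum (fun i (_ : i ∈ Finset.univ) => hN i)).const_mul ((1:ℝ)/2)
    have hVraw := (hA.add hB).add hC
    refine hVraw.congr_deriv ?_
    -- now an equality of real numbers
    simp only [helperC]
    simp only [Finset.sum_add_distrib, ← Finset.mul_sum]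
    rw [hS2, hstar]
    rw [show t^(r-1) = t * t^(r-2) by
      rw [show r - 1 = 1 + (r-2) by ring, Real.rpow_add ht', Real.rpow_one]]
    rw [show r - 1 - 1 = r - 2 by ring]
    push_cast
    ring
  -- nonpositivity of the derivative
  have hD0 : ∀ t ∈ Ioi (0:ℝ),
      ((2 - r) * t * (∑ i, ⟪X i t, ∑ j, Lap i j • X j t⟫)
        + (r - 1) * t ^ (r - 2) * ((∑ i, f i (X i t)) - fstar
            - ∑ i, ⟪gradient (f i) (X i t), X i t - Xstar⟫)) ≤ 0 := by
    intro t ht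
    have ht' : (0:ℝ) < t := ht
    have h1 : (2 - r) * t * (∑ i, ⟪X i t, ∑ j, Lap i j • X j t⟫) ≤ 0 :=
      mul_nonpos_of_nonpos_of_nonneg (by nlinarith) (hQ t)
    have h2 : (∑ i, f i (X i t)) - fstar
        - ∑ i, ⟪gradient (f i) (X i t), X i t - Xstar⟫ ≤ 0 := by
      have hsumle : ∑ i, (f i (X i t) - ⟪gradient (f i) (X i t), X i t - Xstar⟫)
          ≤ ∑ i, f i Xstar := by
        refine Finset.sum_le_sum fun i _ => ?_
        have h := grad_ineq_aux (hconv i) (hdiff i) (X i t) Xstar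
        have he : ⟪gradient (f i) (X i t), Xstar - X i t⟫
            = -⟪gradient (f i) (X i t), X i t - Xstar⟫ := by
          rw [← inner_neg_right, neg_sub]
        rw [he] at h
        linarith
      rw [Finset.sum_sub_distrib] at hsumle
      rw [hfstar]
      linarith
    have h3 : (0:ℝ) ≤ (r-1) * t^(r-2) :=
      mul_nonneg (by linarith) (Real.rpow_nonneg ht'.le _)
    nlinarith
  -- conclude
  exact antitoneOn_of_deriv_nonpos (convex_Ioi 0)
    (fun t ht => (hV t ht).differentiableAt.continuousAt.continuousWithinAt)
    (by rw [interior_Ioi]; exact fun t ht => (hV t ht).differentiableAt.differentiableWithinAt)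
    (by rw [interior_Ioi]; intro t ht; rw [(hV t ht).deriv]; exact hD0 t ht)
end

section
/- Let f : ℝ^d → ℝ be μ-strongly convex and differentiable with L-Lipschitz continuous gradient (0 < μ ≤ L), minimizer x* and minimum value f*. With step size η = 1/L, consider the Nesterov iteration x_{k+1} = y_k − η·∇f(y_k), y_k = x_k + ((1 − √(μη))/(1 + √(μη)))·(x_k − x_{k−1}), with initialization x_0 = y_0. Then for every k ≥ 0, f(x_k) − f* ≤ 2·(f(x_0) − f*)·(1 − √(μ/L))^k. -/
open scoped RealInnerProductSpace
open Real Set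

theorem smooth_upper_aux {d : ℕ} (L : ℝ) (hL : 0 ≤ L)
    (f : EuclideanSpace ℝ (Fin d) → ℝ) (hdiff : Differentiable ℝ f)
    (hlip : LipschitzWith (Real.toNNReal L) (gradient f))
    (v u : EuclideanSpace ℝ (Fin d)) :
    f u ≤ f v + ⟪gradient f v, u - v⟫ + L / 2 * ‖u - v‖ ^ 2 := by
  set w := u - v with hw
  have hgrad : ∀ z : EuclideanSpace ℝ (Fin d), ⟪gradient f z, w⟫ = fderiv ℝ f z w := by
    intro z; rw [gradient, InnerProductSpace.toDual_symm_apply]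
  set φ : ℝ → ℝ := fun t => L / 2 * t ^ 2 * ‖w‖ ^ 2 + t * ⟪gradient f v, w⟫ - f (v + t • w) + f v with hφ
  have hd : ∀ t : ℝ, HasDerivAt φ
      (L * t * ‖w‖ ^ 2 + ⟪gradient f v, w⟫ - ⟪gradient f (v + t • w), w⟫) t := by
    intro t
    have hc : HasDerivAt (fun t : ℝ => v + t • w) w t := by
      simpa using ((hasDerivAt_id t).smul_const w).const_add v
    have hcomp : HasDerivAt (fun t : ℝ => f (v + t • w)) (fderiv ℝ f (v + t • w) w) t :=
      (hdiff (v + t • w)).hasFDerivAt.comp_hasDerivAt t hc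
    have h1 : HasDerivAt (fun t : ℝ => L / 2 * t ^ 2 * ‖w‖ ^ 2 + t * ⟪gradient f v, w⟫)
        (L * t * ‖w‖ ^ 2 + ⟪gradient f v, w⟫) t := by
      have := (((hasDerivAt_pow 2 t).const_mul (L/2)).mul_const (‖w‖^2)).add
        ((hasDerivAt_id t).mul_const ⟪gradient f v, w⟫)
      exact this.congr_deriv (by ring)
    have := (h1.sub hcomp).add_const (f v)
    rw [hgrad (v + t • w)]
    exact this
  have hmono : MonotoneOn φ (Icc (0:ℝ) 1) := by
    apply monotoneOn_of_deriv_nonneg (convex_Icc 0 1)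
    · exact Continuous.continuousOn (continuous_iff_continuousAt.2 fun t => (hd t).continuousAt)
    · intro t ht
      exact (hd t).differentiableAt.differentiableWithinAt
    · intro t ht
      rw [(hd t).deriv]
      simp only [interior_Icc, mem_Ioo] at ht
      have hball : ‖gradient f (v + t • w) - gradient f v‖ ≤ L * (t * ‖w‖) := by
        have := hlip.dist_le_mul (v + t • w) v
        rw [Real.coe_toNNReal _ hL] at this
        simp only [dist_eq_norm, add_sub_cancel_left] at this
        calc ‖gradient f (v + t • w) - gradient f v‖ ≤ L * ‖t • w‖ := this
          _ = L * (t * ‖w‖) := by rw [norm_smul, Real.norm_eq_abs, abs_of_pos ht.1]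
      have hcs : ⟪gradient f (v + t • w) - gradient f v, w⟫
          ≤ ‖gradient f (v + t • w) - gradient f v‖ * ‖w‖ := real_inner_le_norm _ _
      rw [inner_sub_left] at hcs
      nlinarith [norm_nonneg w, ht.1.le, mul_le_mul_of_nonneg_right hball (norm_nonneg w)]
  have h01 : φ 0 ≤ φ 1 := hmono (by simp) (by simp) zero_le_one
  simp only [hφ, one_smul, zero_smul, add_zero, one_pow] at h01
  have : v + w = u := by rw [hw]; abel
  rw [this] at h01
  nlinarith [h01]

/-- For a `μ`-strongly convex differentiable `f` with `L`-Lipschitz gradient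
(`0 < μ ≤ L`), minimizer `xstar`, the Nesterov iteration with step size `η = 1/L`
satisfies `f(x_k) - f* ≤ 2 (f(x_0) - f*) (1 - √(μ/L))^k`. -/
theorem stmt_15 {d : ℕ} (μ Lf : ℝ) (hμ : 0 < μ) (hμL : μ ≤ Lf)
    (f : EuclideanSpace ℝ (Fin d) → ℝ) (hdiff : Differentiable ℝ f)
    (hsc : ∀ x y : EuclideanSpace ℝ (Fin d),
      f x + ⟪gradient f x, y - x⟫ + μ / 2 * ‖y - x‖ ^ 2 ≤ f y)
    (hlip : LipschitzWith (Real.toNNReal Lf) (gradient f))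
    (xstar : EuclideanSpace ℝ (Fin d)) (hmin : ∀ x, f xstar ≤ f x)
    (η : ℝ) (hη : η = 1 / Lf)
    (x y : ℕ → EuclideanSpace ℝ (Fin d))
    (hinit : y 0 = x 0)
    (hxrec : ∀ k : ℕ, x (k + 1) = y k - η • gradient f (y k))
    (hyrec : ∀ k : ℕ, 1 ≤ k →
      y k = x k + ((1 - Real.sqrt (μ * η)) / (1 + Real.sqrt (μ * η))) • (x k - x (k - 1))) :
    ∀ k : ℕ, f (x k) - f xstar ≤ 2 * (f (x 0) - f xstar) * (1 - Real.sqrt (μ / Lf)) ^ k := by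
  have hL : 0 < Lf := lt_of_lt_of_le hμ hμL
  have hLne : Lf ≠ 0 := ne_of_gt hL
  have hμne : μ ≠ 0 := ne_of_gt hμ
  have hμη : μ * η = μ / Lf := by rw [hη]; ring
  set q := Real.sqrt (μ / Lf) with hqdef
  have hqpos : 0 < q := Real.sqrt_pos.mpr (div_pos hμ hL)
  have hqne : q ≠ 0 := ne_of_gt hqpos
  have hq1 : q ≤ 1 := by
    rw [hqdef]
    calc Real.sqrt (μ / Lf) ≤ Real.sqrt 1 := Real.sqrt_le_sqrt ((div_le_one hL).mpr hμL)
      _ = 1 := Real.sqrt_one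
  have h1q : 0 ≤ 1 - q := by linarith
  have hqsq : q ^ 2 = μ * η := by
    rw [hqdef, Real.sq_sqrt (by positivity : (0:ℝ) ≤ μ / Lf), hμη]
  have hηq : η = q ^ 2 / μ := by rw [hqsq]; field_simp
  have hηpos : 0 < η := by rw [hη]; positivity
  have hs : Real.sqrt (μ * η) = q := by rw [hμη, hqdef]
  -- the auxiliary sequence
  obtain ⟨z, hz0, hzS⟩ : ∃ z : ℕ → EuclideanSpace ℝ (Fin d), z 0 = x 0 ∧
      ∀ j, z (j+1) = x (j+1) + ((1-q)/q) • (x (j+1) - x j) :=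
    ⟨fun k => Nat.casesOn k (x 0) (fun j => x (j+1) + ((1-q)/q) • (x (j+1) - x j)), rfl,
      fun j => rfl⟩
  have hF1 : ∀ k, (1 + q) • y k = x k + q • z k := by
    intro k
    cases k with
    | zero =>
      rw [hinit, hz0]
      module
    | succ j =>
      have h := hyrec (j+1) (by omega)
      simp only [hs, Nat.add_sub_cancel] at h
      rw [h, hzS j]
      match_scalars <;> field_simp <;> ring
  have hF2 : ∀ k, z (k+1) = (1-q) • z k + q • y k - (q/μ) • gradient f (y k) := by
    intro k
    have hxk : x k = (1+q) • y k - q • z k := by rw [hF1 k]; module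
    rw [hzS k, hxrec k, hηq, hxk]
    match_scalars <;> field_simp <;> ring
  have hdesc : ∀ k, f (x (k+1)) ≤ f (y k) - q^2/(2*μ) * ‖gradient f (y k)‖^2 := by
    intro k
    have h := smooth_upper_aux Lf hL.le f hdiff hlip (y k) (x (k+1))
    have hd : x (k+1) - y k = -(η • gradient f (y k)) := by rw [hxrec k]; module
    rw [hd] at h
    have e : ⟪gradient f (y k), -(η • gradient f (y k))⟫ = -(η * ‖gradient f (y k)‖^2) := by
      rw [inner_neg_right, real_inner_smul_right, real_inner_self_eq_norm_sq]
    have e2 : ‖-(η • gradient f (y k))‖^2 = η^2 * ‖gradient f (y k)‖^2 := by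
      rw [norm_neg, norm_smul, Real.norm_eq_abs, mul_pow, sq_abs]
    rw [e, e2] at h
    have hLfη : Lf * η = 1 := by rw [hη]; field_simp
    have e3 : Lf / 2 * (η^2 * ‖gradient f (y k)‖^2) = η/2 * ‖gradient f (y k)‖^2 := by
      linear_combination (η * ‖gradient f (y k)‖^2 / 2) * hLfη
    have e4 : q^2/(2*μ) = η/2 := by rw [hηq]; ring
    rw [e3] at h
    rw [e4]
    linarith
  -- the minimizer has zero gradient
  have hgrad_star : gradient f xstar = 0 := by
    have hloc : IsLocalMin f xstar := Filter.Eventually.of_forall hmin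
    have h0 := hloc.hasFDerivAt_eq_zero (hdiff xstar).hasFDerivAt
    rw [gradient, h0]
    simp
  have hΦ0 : μ/2 * ‖x 0 - xstar‖^2 ≤ f (x 0) - f xstar := by
    have h := hsc xstar (x 0)
    rw [hgrad_star, inner_zero_left] at h
    linarith
  -- key potential decrease
  have key : ∀ k, f (x (k+1)) - f xstar + μ/2 * ‖z (k+1) - xstar‖^2
      ≤ (1-q) * (f (x k) - f xstar + μ/2 * ‖z k - xstar‖^2) := by
    intro k
    have hxk : x k = (1+q) • y k - q • z k := by rw [hF1 k]; module
    set g : EuclideanSpace ℝ (Fin d) := gradient f (y k) with hg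
    set a : EuclideanSpace ℝ (Fin d) := z k - xstar with ha
    set b : EuclideanSpace ℝ (Fin d) := y k - xstar with hb
    have hxy : x k - y k = -(q • (a - b)) := by rw [hxk, ha, hb]; module
    have hz1 : z (k+1) - xstar = (1-q) • a + q • b - (q/μ) • g := by
      rw [hF2 k, ha, hb]; module
    have e1 : μ/2 * ‖(1-q) • a + q • b - (q/μ) • g‖^2
        = μ/2*(1-q)^2*‖a‖^2 + μ/2*q^2*‖b‖^2 + q^2/(2*μ)*‖g‖^2
          + μ*(1-q)*q*⟪a, b⟫ - q*(1-q)*⟪a, g⟫ - q^2*⟪b, g⟫ := by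
      simp only [← real_inner_self_eq_norm_sq]
      simp only [inner_sub_left, inner_sub_right, inner_add_left, inner_add_right,
        real_inner_smul_left, real_inner_smul_right]
      simp only [real_inner_comm b a, real_inner_comm g a, real_inner_comm g b]
      field_simp
      ring
    have e2 : ‖x k - y k‖^2 = q^2*(‖a‖^2 - 2*⟪a, b⟫ + ‖b‖^2) := by
      rw [hxy, norm_neg, norm_smul, Real.norm_eq_abs, mul_pow, sq_abs, norm_sub_sq_real]
    have e3 : ⟪g, x k - y k⟫ = -(q*⟪a, g⟫) + q*⟪b, g⟫ := by
      rw [hxy, inner_neg_right, real_inner_smul_right, inner_sub_right,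
        real_inner_comm g a, real_inner_comm g b]
      ring
    have e4 : ⟪g, xstar - y k⟫ = -⟪b, g⟫ := by
      rw [show xstar - y k = -b from by rw [hb]; module, inner_neg_right, real_inner_comm]
    have e5 : ‖xstar - y k‖^2 = ‖b‖^2 := by rw [hb, norm_sub_rev]
    have h4 := hsc (y k) (x k)
    rw [← hg, e3, e2] at h4
    have h5 := hsc (y k) xstar
    rw [← hg, e4, e5] at h5
    have h3 := hdesc k
    rw [← hg] at h3
    have h4' := mul_le_mul_of_nonneg_left h4 h1q
    have h5' := mul_le_mul_of_nonneg_left h5 hqpos.le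
    have hab : (0:ℝ) ≤ ‖a‖^2 - 2*⟪a, b⟫ + ‖b‖^2 := by
      rw [← norm_sub_sq_real]
      positivity
    have hcnn : (0:ℝ) ≤ μ/2*q*(1-q)*(1+q) := by
      have h1 : (0:ℝ) ≤ μ/2*q := by positivity
      have h2 : (0:ℝ) ≤ 1+q := by linarith
      exact mul_nonneg (mul_nonneg h1 h1q) h2
    have hab' : (0:ℝ) ≤ (μ/2*q*(1-q)*(1+q)) * (‖a‖^2 - 2*⟪a, b⟫ + ‖b‖^2) :=
      mul_nonneg hcnn hab
    rw [hz1, e1]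
    linarith [h3, h4', h5', hab']
  -- induction
  have hmain : ∀ k, f (x k) - f xstar + μ/2 * ‖z k - xstar‖^2
      ≤ 2 * (f (x 0) - f xstar) * (1-q)^k := by
    intro k
    induction k with
    | zero =>
      rw [hz0]
      simp only [pow_zero, mul_one]
      linarith
    | succ k ih =>
      calc f (x (k+1)) - f xstar + μ/2 * ‖z (k+1) - xstar‖^2
          ≤ (1-q) * (f (x k) - f xstar + μ/2 * ‖z k - xstar‖^2) := key k
        _ ≤ (1-q) * (2 * (f (x 0) - f xstar) * (1-q)^k) := mul_le_mul_of_nonneg_left ih h1q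
        _ = 2 * (f (x 0) - f xstar) * (1-q)^(k+1) := by ring
  intro k
  have h := hmain k
  have hnn : (0:ℝ) ≤ μ/2 * ‖z k - xstar‖^2 := by positivity
  linarith
end
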